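/- Let N ≥ 1 and let X ~ N(-a·1_N, σ²Σ) and Y ~ N(-b·1_N, τ²Σ) be independent Gaussian vectors with Σ = (1/2)(I_N + 1_N 1_N^T), where a ∈ ℝ, b ≥ τ²/2, σ, τ > 0. Then for every binary vector δ ∈ {0,1}^N, E[ (Σ_{i=1}^N exp(X_i + δ_i Y_i)) / (1 + Σ_{i=1}^N exp(X_i + δ_i Y_i)) ] ≥ (1 + exp(σ²/2 + a + τ²/2 + b)/N)^{-1}. -/

import Mathlib

/-!
Write `S = ∑ᵢ exp(X_i + δ_i Y_i)`, so that the integrand is `S / (1 + S) = (1 + S⁻¹)⁻¹`.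
Since `u ↦ (1 + u)⁻¹` is convex, Jensen's inequality gives `E[S/(1+S)] ≥ (1 + E[S⁻¹])⁻¹`, and by
the AM-HM inequality `S⁻¹ ≤ N⁻² ∑ᵢ exp(-X_i - δ_i Y_i)`. Each `exp(-X_i - δ_i Y_i)` is lognormal
with mean `exp(σ²/2 + a + δ_i (τ²/2 + b)) ≤ exp(σ²/2 + a + τ²/2 + b)`, since
`τ²/2 + b ≥ 0` when `b ≥ τ²/2`. Hence `E[S⁻¹] ≤ exp(σ²/2 + a + τ²/2 + b) / N`.
-/

open MeasureTheory ProbabilityTheory Real Finset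
open scoped NNReal

lemma Finset.inv_sum_le_sum_inv_div_card_sq {ι : Type*} (s : Finset ι) {e : ι → ℝ}
    (he : ∀ i ∈ s, 0 < e i) : (∑ i ∈ s, e i)⁻¹ ≤ (∑ i ∈ s, (e i)⁻¹) / (#s : ℝ) ^ 2 := by
  rcases s.eq_empty_or_nonempty with rfl | hs
  · simp
  have hsum : 0 < ∑ i ∈ s, e i := sum_pos he hs
  have hcard : (0 : ℝ) < #s := by exact_mod_cast hs.card_pos
  have titu := sq_sum_div_le_sum_sq_div s (fun _ => (1 : ℝ)) he
  simp only [sum_const, nsmul_eq_mul, mul_one, one_pow, one_div] at titu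
  rw [le_div_iff₀ (by positivity)]
  calc (∑ i ∈ s, e i)⁻¹ * (#s : ℝ) ^ 2 = (#s : ℝ) ^ 2 / ∑ i ∈ s, e i := by ring
    _ ≤ ∑ i ∈ s, (e i)⁻¹ := titu

lemma convexOn_inv_one_add : ConvexOn ℝ (Set.Ici 0) fun u : ℝ => (1 + u)⁻¹ := by
  refine (((convexOn_zpow (𝕜 := ℝ) (-1)).translate_right 1).subset ?_ (convex_Ici 0)).congr ?_
  · intro u (hu : 0 ≤ u)
    show 0 < 1 + u
    linarith
  · intro u _
    simp

section BoltzmannRatio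

variable {Ω : Type*} [MeasurableSpace Ω] {μ : Measure Ω}

lemma inv_one_add_integral_le_integral_inv_one_add [IsProbabilityMeasure μ] {f : Ω → ℝ}
    (hf₀ : ∀ᵐ ω ∂μ, 0 ≤ f ω) (hf : Integrable f μ) :
    (1 + ∫ ω, f ω ∂μ)⁻¹ ≤ ∫ ω, (1 + f ω)⁻¹ ∂μ := by
  have hbdd : Integrable (fun ω => (1 + f ω)⁻¹) μ := by
    refine (integrable_const (1 : ℝ)).mono'
      (hf.aemeasurable.const_add 1).inv.aestronglyMeasurable ?_
    filter_upwards [hf₀] with ω hω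
    rw [norm_inv, Real.norm_of_nonneg (by linarith)]
    exact inv_le_one_of_one_le₀ (by linarith)
  exact convexOn_inv_one_add.map_integral_le
    (continuousOn_const.add continuousOn_id |>.inv₀ fun u (hu : 0 ≤ u) =>
      (by linarith : (0 : ℝ) < 1 + u).ne')
    isClosed_Ici hf₀ hf hbdd

variable {ι : Type*} [Fintype ι] {V : ι → Ω → ℝ}

lemma integrable_inv_sum_exp (hV : ∀ i, Integrable (fun ω => exp (-V i ω)) μ) :
    Integrable (fun ω => (∑ i, exp (V i ω))⁻¹) μ := by
  have hmeas : AEStronglyMeasurable (fun ω => (∑ i, exp (V i ω))⁻¹) μ := by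
    have hinv : (fun ω => (∑ i, exp (V i ω))⁻¹) = fun ω => (∑ i, (exp (-V i ω))⁻¹)⁻¹ := by
      simp only [exp_neg, inv_inv]
    rw [hinv]
    exact (Finset.aemeasurable_fun_sum _ fun i _ => (hV i).aemeasurable.inv).inv
      |>.aestronglyMeasurable
  refine ((integrable_finsetSum univ fun i _ => hV i).div_const ((Fintype.card ι : ℝ) ^ 2)).mono'
    hmeas (Filter.Eventually.of_forall fun ω => ?_)
  rw [norm_inv, Real.norm_of_nonneg (by positivity)]
  simpa only [exp_neg, card_univ] using
    inv_sum_le_sum_inv_div_card_sq univ fun i _ => exp_pos (V i ω)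

lemma integral_inv_sum_exp_le (hV : ∀ i, Integrable (fun ω => exp (-V i ω)) μ) {K : ℝ}
    (hK : ∀ i, ∫ ω, exp (-V i ω) ∂μ ≤ K) :
    ∫ ω, (∑ i, exp (V i ω))⁻¹ ∂μ ≤ K / Fintype.card ι := by
  calc ∫ ω, (∑ i, exp (V i ω))⁻¹ ∂μ
      ≤ ∫ ω, (∑ i, exp (-V i ω)) / (Fintype.card ι : ℝ) ^ 2 ∂μ :=
        integral_mono (integrable_inv_sum_exp hV)
          ((integrable_finsetSum univ fun i _ => hV i).div_const _) fun ω => by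
          simpa only [exp_neg, card_univ] using
            inv_sum_le_sum_inv_div_card_sq univ fun i _ => exp_pos (V i ω)
    _ = (∑ i, ∫ ω, exp (-V i ω) ∂μ) / (Fintype.card ι : ℝ) ^ 2 := by
        rw [integral_div, integral_finsetSum _ fun i _ => hV i]
    _ ≤ (Fintype.card ι * K) / (Fintype.card ι : ℝ) ^ 2 := by
        gcongr
        simpa using sum_le_sum fun i (_ : i ∈ univ) => hK i
    _ = K / Fintype.card ι := by
        rcases eq_or_ne (Fintype.card ι : ℝ) 0 with h | h
        · simp [h]
        · field_simp

theorem inv_one_add_div_card_le_integral_sum_exp_div [IsProbabilityMeasure μ] [Nonempty ι]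
    (hV : ∀ i, Integrable (fun ω => exp (-V i ω)) μ) {K : ℝ}
    (hK : ∀ i, ∫ ω, exp (-V i ω) ∂μ ≤ K) :
    (1 + K / Fintype.card ι)⁻¹ ≤
      ∫ ω, (∑ i, exp (V i ω)) / (1 + ∑ i, exp (V i ω)) ∂μ := by
  have hS : ∀ ω, 0 < ∑ i, exp (V i ω) := fun ω => sum_pos (fun i _ => exp_pos _) univ_nonempty
  have hS_div : ∀ ω, (∑ i, exp (V i ω)) / (1 + ∑ i, exp (V i ω)) =
      (1 + (∑ i, exp (V i ω))⁻¹)⁻¹ := fun ω => by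
    field_simp [(hS ω).ne']
    ring
  calc (1 + K / Fintype.card ι)⁻¹ ≤ (1 + ∫ ω, (∑ i, exp (V i ω))⁻¹ ∂μ)⁻¹ := by
        gcongr
        exact integral_inv_sum_exp_le hV hK
    _ ≤ ∫ ω, (1 + (∑ i, exp (V i ω))⁻¹)⁻¹ ∂μ :=
        inv_one_add_integral_le_integral_inv_one_add
          (Filter.Eventually.of_forall fun ω => (inv_pos.2 (hS ω)).le)
          (integrable_inv_sum_exp hV)
    _ = _ := by simp_rw [hS_div]

end BoltzmannRatio

section SharedNoise

variable {ι : Type*} [Fintype ι]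

lemma integrable_exp_mul_add_eval_gaussianReal (m : ℝ) (v : ℝ≥0) (t : ℝ) (i : ι) :
    Integrable (fun p : ℝ × (ι → ℝ) => exp (t * (p.1 + p.2 i)))
      ((gaussianReal m v).prod (Measure.pi fun _ => gaussianReal m v)) := by
  simp_rw [mul_add, exp_add]
  exact (integrable_exp_mul_gaussianReal t).mul_prod
    (integrable_comp_eval (μ := fun _ : ι => gaussianReal m v) (i := i)
      (integrable_exp_mul_gaussianReal t))

lemma integral_exp_mul_add_eval_gaussianReal (m : ℝ) (v : ℝ≥0) (t : ℝ) (i : ι) :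
    ∫ p : ℝ × (ι → ℝ), exp (t * (p.1 + p.2 i))
      ∂(gaussianReal m v).prod (Measure.pi fun _ => gaussianReal m v) =
      exp (2 * m * t + v * t ^ 2) := by
  have hmgf : ∫ x, exp (t * x) ∂gaussianReal m v = exp (m * t + v * t ^ 2 / 2) := by
    simpa [mgf] using congrFun (mgf_id_gaussianReal (μ := m) (v := v)) t
  simp_rw [mul_add t, exp_add (t * _)]
  rw [integral_prod_mul (fun x => exp (t * x)) (fun z : ι → ℝ => exp (t * z i)),
    integral_comp_eval (μ := fun _ : ι => gaussianReal m v) (i := i)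
      (integrable_exp_mul_gaussianReal t).aestronglyMeasurable, hmgf, ← exp_add]
  ring_nf

/-- Under this law `((W + Z_i) / √2)_i` is standard Gaussian with covariance `½ (I + 1 1ᵀ)`. -/
noncomputable abbrev stdSharedNoise (ι : Type*) [Fintype ι] : Measure (ℝ × (ι → ℝ)) :=
  (gaussianReal 0 1).prod (Measure.pi fun _ => gaussianReal 0 1)

lemma exp_add_mul_add_mul (c s r u w : ℝ) :
    exp (c + s * u + r * w) = exp c * (exp (s * u) * exp (r * w)) := by
  rw [← exp_add, ← exp_add]
  ring_nf

lemma integrable_exp_affine_stdSharedNoise_prod (c s r : ℝ) (i : ι) :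
    Integrable (fun q : (ℝ × (ι → ℝ)) × (ℝ × (ι → ℝ)) =>
        exp (c + s * (q.1.1 + q.1.2 i) + r * (q.2.1 + q.2.2 i)))
      ((stdSharedNoise ι).prod (stdSharedNoise ι)) := by
  simp_rw [exp_add_mul_add_mul]
  exact ((integrable_exp_mul_add_eval_gaussianReal 0 1 s i).mul_prod
    (integrable_exp_mul_add_eval_gaussianReal 0 1 r i)).const_mul _

lemma integral_exp_affine_stdSharedNoise_prod (c s r : ℝ) (i : ι) :
    ∫ q : (ℝ × (ι → ℝ)) × (ℝ × (ι → ℝ)),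
        exp (c + s * (q.1.1 + q.1.2 i) + r * (q.2.1 + q.2.2 i))
      ∂(stdSharedNoise ι).prod (stdSharedNoise ι) = exp (c + s ^ 2 + r ^ 2) := by
  simp_rw [exp_add_mul_add_mul]
  rw [integral_const_mul, integral_prod_mul (fun p : ℝ × (ι → ℝ) => exp (s * (p.1 + p.2 i)))
      (fun p : ℝ × (ι → ℝ) => exp (r * (p.1 + p.2 i))),
    integral_exp_mul_add_eval_gaussianReal, integral_exp_mul_add_eval_gaussianReal,
    ← exp_add, ← exp_add]
  simp [add_assoc]

end SharedNoise

theorem expected_boltzmann_lower_bound_binary_general (N : ℕ) (hN : 1 ≤ N) (σ τ a b : ℝ)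
    (hb : τ ^ 2 / 2 ≤ b)
    (δ : Fin N → ℝ) (hδ : ∀ i, δ i = 0 ∨ δ i = 1) :
    (1 + Real.exp (σ ^ 2 / 2 + a + τ ^ 2 / 2 + b) / N)⁻¹ ≤
      ∫ q : (ℝ × (Fin N → ℝ)) × (ℝ × (Fin N → ℝ)),
        (∑ i : Fin N, Real.exp ((-a + σ * (q.1.1 + q.1.2 i) / Real.sqrt 2) +
            δ i * (-b + τ * (q.2.1 + q.2.2 i) / Real.sqrt 2))) /
          (1 + ∑ i : Fin N, Real.exp ((-a + σ * (q.1.1 + q.1.2 i) / Real.sqrt 2) +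
            δ i * (-b + τ * (q.2.1 + q.2.2 i) / Real.sqrt 2)))
        ∂(((gaussianReal 0 1).prod (Measure.pi fun _ : Fin N => gaussianReal 0 1)).prod
            ((gaussianReal 0 1).prod (Measure.pi fun _ : Fin N => gaussianReal 0 1))) := by
  have : Nonempty (Fin N) := ⟨⟨0, hN⟩⟩
  have hexp_neg_affine : ∀ i, (fun q : (ℝ × (Fin N → ℝ)) × (ℝ × (Fin N → ℝ)) =>
      exp (-((-a + σ * (q.1.1 + q.1.2 i) / √2) + δ i * (-b + τ * (q.2.1 + q.2.2 i) / √2)))) =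
      fun q => exp ((a + δ i * b) + -(σ / √2) * (q.1.1 + q.1.2 i) +
        -(δ i * τ / √2) * (q.2.1 + q.2.2 i)) :=
    fun i => funext fun q => by ring_nf
  have hexponent : ∀ i, a + δ i * b + (-(σ / √2)) ^ 2 + (-(δ i * τ / √2)) ^ 2 ≤
      σ ^ 2 / 2 + a + τ ^ 2 / 2 + b := by
    intro i
    simp only [neg_sq, div_pow, mul_pow, sq_sqrt zero_le_two]
    rcases hδ i with h | h <;> simp only [h] <;> nlinarith [sq_nonneg τ]
  have key := inv_one_add_div_card_le_integral_sum_exp_div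
    (μ := (stdSharedNoise (Fin N)).prod (stdSharedNoise (Fin N)))
    (fun i => by rw [hexp_neg_affine i]; exact integrable_exp_affine_stdSharedNoise_prod _ _ _ i)
    (fun i => by
      rw [hexp_neg_affine i, integral_exp_affine_stdSharedNoise_prod]
      exact exp_le_exp.2 (hexponent i))
  rwa [Fintype.card_fin] at key

/-- Lower bound on the expected Boltzmann acceptance probability for independent exchangeable
Gaussian vectors `X ~ N(-a·1_N, σ²Σ)`, `Y ~ N(-b·1_N, τ²Σ)` with `Σ = ½(I_N + 1_N 1_Nᵀ)`
and `b ≥ τ²/2`, realised as `X_i = -a + σ(W + Z_i)/√2`, `Y_i = -b + τ(W' + Z'_i)/√2`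
with all underlying variables i.i.d. standard normal, for any binary vector `δ`. -/
theorem expected_boltzmann_lower_bound_binary (N : ℕ) (hN : 1 ≤ N) (σ τ a b : ℝ)
    (hσ : 0 < σ) (hτ : 0 < τ) (hb : τ ^ 2 / 2 ≤ b)
    (δ : Fin N → ℝ) (hδ : ∀ i, δ i = 0 ∨ δ i = 1) :
    (1 + Real.exp (σ ^ 2 / 2 + a + τ ^ 2 / 2 + b) / N)⁻¹ ≤
      ∫ q : (ℝ × (Fin N → ℝ)) × (ℝ × (Fin N → ℝ)),
        (∑ i : Fin N, Real.exp ((-a + σ * (q.1.1 + q.1.2 i) / Real.sqrt 2) +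
            δ i * (-b + τ * (q.2.1 + q.2.2 i) / Real.sqrt 2))) /
          (1 + ∑ i : Fin N, Real.exp ((-a + σ * (q.1.1 + q.1.2 i) / Real.sqrt 2) +
            δ i * (-b + τ * (q.2.1 + q.2.2 i) / Real.sqrt 2)))
        ∂(((gaussianReal 0 1).prod (Measure.pi fun _ : Fin N => gaussianReal 0 1)).prod
            ((gaussianReal 0 1).prod (Measure.pi fun _ : Fin N => gaussianReal 0 1))) :=
  expected_boltzmann_lower_bound_binary_general N hN σ τ a b hb δ hδ
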